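/- arXiv:2207.12328 — 2 statements merged into one kernel-verified Lean document; each statement's English description precedes it below -/
import Mathlib

section
/- For h ∈ (0,1], the h-homophilic extension C^h defined by C^h_{(i,v),(j,v)} = (P_{j,v} + h P_{j,1−v}) C_{ij} and C^h_{(i,v),(j,1−v)} = (1−h) P_{j,1−v} C_{ij} is reciprocal with respect to N* if and only if for all i, j ∈ A with C_{ij} ≠ 0, (P_i − P_j) h = 0; in particular, if the prevalence P is constant then C^h is reciprocal. -/
theorem homophilic_extension_reciprocity_iff
    {A : Type*} [Fintype A]
    (N : A → ℝ) (hN : ∀ i, 0 < N i)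
    (C : A → A → ℝ) (hC : ∀ i j, 0 ≤ C i j)
    (hrec : ∀ i j, N i * C i j = N j * C j i)
    (P : A → ℝ) (hP : ∀ i, P i ∈ Set.Ioo (0 : ℝ) 1)
    (h : ℝ) (hh : h ∈ Set.Ioc (0 : ℝ) 1)
    (Pv : A → Bool → ℝ) (hPv : ∀ j, Pv j true = P j ∧ Pv j false = 1 - P j)
    (Nstar : A × Bool → ℝ) (hNstar : ∀ i v, Nstar (i, v) = Pv i v * N i)
    (Ch : A × Bool → A × Bool → ℝ)
    (hChSame : ∀ i j v, Ch (i, v) (j, v) = (Pv j v + h * Pv j (!v)) * C i j)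
    (hChOpp : ∀ i j v, Ch (i, v) (j, !v) = (1 - h) * Pv j (!v) * C i j) :
    ((∀ i j : A, ∀ v w : Bool,
        Nstar (i, v) * Ch (i, v) (j, w) = Nstar (j, w) * Ch (j, w) (i, v)) ↔
      (∀ i j, C i j ≠ 0 → (P i - P j) * h = 0)) ∧
    ((∀ i j, P i = P j) →
      ∀ i j : A, ∀ v w : Bool,
        Nstar (i, v) * Ch (i, v) (j, w) = Nstar (j, w) * Ch (j, w) (i, v)) := by
  have hPt : ∀ j, Pv j true = P j := fun j => (hPv j).1
  have hPf : ∀ j, Pv j false = 1 - P j := fun j => (hPv j).2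
  have hOppT : ∀ i j, Ch (i, true) (j, false) = (1 - h) * (1 - P j) * C i j := by
    intro i j
    have := hChOpp i j true
    simpa [hPf] using this
  have hOppF : ∀ i j, Ch (i, false) (j, true) = (1 - h) * P j * C i j := by
    intro i j
    have := hChOpp i j false
    simpa [hPt] using this
  have hSameT : ∀ i j, Ch (i, true) (j, true) = (P j + h * (1 - P j)) * C i j := by
    intro i j
    have := hChSame i j true
    simpa [hPt, hPf] using this
  have hSameF : ∀ i j, Ch (i, false) (j, false) = ((1 - P j) + h * P j) * C i j := by
    intro i j
    have := hChSame i j false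
    simpa [hPt, hPf] using this
  have back : (∀ i j, C i j ≠ 0 → (P i - P j) * h = 0) →
      ∀ i j : A, ∀ v w : Bool,
        Nstar (i, v) * Ch (i, v) (j, w) = Nstar (j, w) * Ch (j, w) (i, v) := by
    intro H i j v w
    by_cases hC0 : C i j = 0
    · have hC0' : C j i = 0 := by
        have := hrec i j
        rw [hC0, mul_zero] at this
        exact (mul_eq_zero.mp this.symm).resolve_left (hN j).ne'
      cases v <;> cases w <;>
        simp [hSameT, hSameF, hOppT, hOppF, hC0, hC0']
    · have hpq := H i j hC0
      cases v <;> cases w <;>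
        rw [hNstar, hNstar]
      · rw [hSameF, hSameF, hPf, hPf]
        linear_combination (1 - P j) * ((1 - P i) + h * P i) * hrec i j - N i * C i j * hpq
      · rw [hOppF i j, hOppT j i, hPf, hPt]
        linear_combination (1 - h) * (1 - P i) * P j * hrec i j
      · rw [hOppT i j, hOppF j i, hPt, hPf]
        linear_combination (1 - h) * P i * (1 - P j) * hrec i j
      · rw [hSameT, hSameT, hPt, hPt]
        linear_combination P j * (P i + h * (1 - P i)) * hrec i j + N i * C i j * hpq
  refine ⟨⟨?_, back⟩, fun hc => back fun i j _ => by rw [hc i j]; ring⟩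
  intro H i j hCij
  have key := H i j true true
  rw [hNstar, hNstar, hSameT, hSameT, hPt, hPt] at key
  have h1 : (N i * C i j) * ((P i - P j) * h) = 0 := by
    linear_combination key - P j * (P i + h * (1 - P i)) * hrec i j
  exact (mul_eq_zero.mp h1).resolve_left (mul_ne_zero (hN i).ne' hCij)
end

section
/- The specific homophily h_{(i,v),j}(C,P) = 1 − C_{(i,v),(j,1−v)} / (P_{j,1−v} (C_{(i,v),(j,v)} + C_{(i,v),(j,1−v)})) of the h-homophilic extension C^h equals h for every i, j ∈ A and v ∈ {0,1}, provided C_{ij} > 0 and 0 < P_j < 1. -/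
theorem specific_homophily_of_extension
    {A : Type*} [Fintype A]
    (C : A → A → ℝ) (hC : ∀ i j, 0 ≤ C i j)
    (P : A → ℝ) (hP : ∀ i, P i ∈ Set.Ioo (0 : ℝ) 1)
    (h : ℝ) (hh : h ∈ Set.Ico (0 : ℝ) 1)
    (Pv : A → Bool → ℝ) (hPv : ∀ j, Pv j true = P j ∧ Pv j false = 1 - P j)
    (Ch : A × Bool → A × Bool → ℝ)
    (hChSame : ∀ i j v, Ch (i, v) (j, v) = (Pv j v + h * Pv j (!v)) * C i j)
    (hChOpp : ∀ i j v, Ch (i, v) (j, !v) = (1 - h) * Pv j (!v) * C i j) :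
    ∀ i j : A, ∀ v : Bool, 0 < C i j →
      1 - Ch (i, v) (j, !v) / (Pv j (!v) * (Ch (i, v) (j, v) + Ch (i, v) (j, !v))) = h := by
  intro i j v hCij
  obtain ⟨hPt, hPf⟩ := hPv j
  obtain ⟨hP0, hP1⟩ := hP j
  have hpos : 0 < Pv j (!v) := by cases v <;> simp [hPt, hPf] <;> linarith
  have hone : Pv j v + Pv j (!v) = 1 := by cases v <;> simp [hPt, hPf] <;> ring
  rw [hChSame, hChOpp,
    show (Pv j v + h * Pv j (!v)) * C i j + (1 - h) * Pv j (!v) * C i j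
      = (Pv j v + Pv j (!v)) * C i j from by ring, hone, one_mul]
  field_simp
  ring
end
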